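/- arXiv:2001.08415 — 4 statements merged into one kernel-verified Lean document; each statement's English description precedes it below -/
import Mathlib

section
/- For nonnegative constants a, b and σ₀ ≥ 0, the minimizer over s ≥ 0 of the function F(s) = 2as + b + (s - σ₀)² for s ≠ 0 and F(0) = σ₀² is s* = σ₀ - a if σ₀ - a ≥ √b, and s* = 0 otherwise. -/
/-!
Writing `c = σ₀ - a` and completing the square, `F s = σ₀² + (b - c²) + (s - c)²` for `s ≠ 0`,
while `F 0 = σ₀²`. So a nonzero `s` can only beat `s = 0` through the term `b - c²`: when
`√b ≤ c` the vertex `c ≥ 0` is admissible and `b - c² ≤ 0`, and when `c < √b` the quadratic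
branch stays above `0` on `s ≥ 0` (by `b > c²` if `c > 0`, by monotonicity if `c ≤ 0`).
-/

/-- `F s - σ₀²` in the variable `c = σ₀ - a`. -/
noncomputable def thresholdObjective (b c s : ℝ) : ℝ :=
  if s = 0 then 0 else b - c ^ 2 + (s - c) ^ 2

section

variable {b c : ℝ}

lemma thresholdObjective_self_le (hb : 0 ≤ b) (hc : √b ≤ c) (s : ℝ) :
    thresholdObjective b c c ≤ thresholdObjective b c s := by
  have hbc : b ≤ c ^ 2 := (Real.sqrt_le_left (Real.sqrt_nonneg b |>.trans hc)).mp hc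
  unfold thresholdObjective
  split_ifs <;> nlinarith [sq_nonneg (s - c)]

lemma thresholdObjective_nonneg (hb : 0 ≤ b) (hc : c < √b) {s : ℝ} (hs : 0 ≤ s) :
    0 ≤ thresholdObjective b c s := by
  unfold thresholdObjective
  split_ifs with hs0
  · exact le_rfl
  rcases le_or_gt c 0 with hc0 | hc0
  · nlinarith [mul_nonneg hs (sub_nonneg.mpr hc0)]
  · have hcb : c ^ 2 < b := (Real.lt_sqrt hc0.le).mp hc
    nlinarith [sq_nonneg (s - c)]

lemma thresholdObjective_threshold_le (hb : 0 ≤ b) {s : ℝ} (hs : 0 ≤ s) :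
    thresholdObjective b c (if √b ≤ c then c else 0) ≤ thresholdObjective b c s := by
  split_ifs with hc
  · exact thresholdObjective_self_le hb hc s
  · simpa [thresholdObjective] using thresholdObjective_nonneg hb (not_le.mp hc) hs

end

theorem stmt0_general (a b σ₀ : ℝ) (hb : 0 ≤ b)
    (F : ℝ → ℝ)
    (hF : ∀ s, F s = if s = 0 then σ₀ ^ 2 else 2 * a * s + b + (s - σ₀) ^ 2) :
    ∀ s, 0 ≤ s →
      F (if Real.sqrt b ≤ σ₀ - a then σ₀ - a else 0) ≤ F s := by
  have hF' : ∀ s, F s = σ₀ ^ 2 + thresholdObjective b (σ₀ - a) s := fun s => by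
    rw [hF, thresholdObjective]
    split_ifs <;> ring
  intro s hs
  rw [hF', hF']
  exact add_le_add le_rfl (thresholdObjective_threshold_le hb hs)

/-- For nonnegative constants `a, b` and `σ₀ ≥ 0`, the minimizer over `s ≥ 0` of
`F(s) = 2as + b + (s - σ₀)²` for `s ≠ 0`, `F(0) = σ₀²`, is `σ₀ - a` if `σ₀ - a ≥ √b`
and `0` otherwise. -/
theorem stmt0 (a b σ₀ : ℝ) (ha : 0 ≤ a) (hb : 0 ≤ b) (hσ : 0 ≤ σ₀)
    (F : ℝ → ℝ)
    (hF : ∀ s, F s = if s = 0 then σ₀ ^ 2 else 2 * a * s + b + (s - σ₀) ^ 2) :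
    ∀ s, 0 ≤ s →
      F (if Real.sqrt b ≤ σ₀ - a then σ₀ - a else 0) ≤ F s :=
  stmt0_general a b σ₀ hb F hF
end

section
/- The unconstrained maximizer over s ≥ 0 of f(s) = min(b, [s-a]₊²) - (s-σ)² + s² - [s-a]₊² is s* = a + max(√b, σ), for any a, b ≥ 0 and σ ≥ 0. -/
/-!
Since `s² - (s - σ)² = 2σs - σ²`, the objective is bounded both by `2σs - σ²` (drop the `min`
against `b`) and by `b - [s-a]₊² + 2σs - σ² ≤ b + 2σa - ([s-a]₊ - σ)²` (take the `b` branch).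
If `√b ≤ σ`, the point `a + σ` attains the second bound `b + 2σa`. If `σ ≤ √b`, the point `a + √b`
is where the two branches meet: to its left the first, increasing bound applies, and to its right
the second branch is decreasing because `[s-a]₊ ≥ √b ≥ σ`.
-/

noncomputable def maximizerObjective (a b σ s : ℝ) : ℝ :=
  min b (max (s - a) 0 ^ 2) - (s - σ) ^ 2 + s ^ 2 - max (s - a) 0 ^ 2

namespace maximizerObjective

theorem le_linear (a b σ s : ℝ) : maximizerObjective a b σ s ≤ 2 * σ * s - σ ^ 2 := by
  have := min_le_right b (max (s - a) 0 ^ 2)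
  unfold maximizerObjective
  nlinarith

theorem le_quadratic (a b σ s : ℝ) :
    maximizerObjective a b σ s ≤ b - max (s - a) 0 ^ 2 + 2 * σ * s - σ ^ 2 := by
  have := min_le_left b (max (s - a) 0 ^ 2)
  unfold maximizerObjective
  nlinarith

theorem add_eq {a b σ m : ℝ} (hm : 0 ≤ m) (hbm : b ≤ m ^ 2) :
    maximizerObjective a b σ (a + m) = b - m ^ 2 + 2 * σ * (a + m) - σ ^ 2 := by
  rw [maximizerObjective, add_sub_cancel_left, max_eq_left hm, min_eq_left hbm]
  ring

theorem le_add_max_sqrt {a b σ : ℝ} (hb : 0 ≤ b) (hσ : 0 ≤ σ) (s : ℝ) :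
    maximizerObjective a b σ s ≤ maximizerObjective a b σ (a + max (√b) σ) := by
  rcases le_total (√b) σ with hbσ | hσb
  · have hb_le_sq : b ≤ σ ^ 2 := (Real.sqrt_le_left hσ).1 hbσ
    rw [max_eq_right hbσ, add_eq hσ hb_le_sq]
    have hs := mul_le_mul_of_nonneg_left (le_max_left (s - a) 0) hσ
    nlinarith [le_quadratic a b σ s, sq_nonneg (max (s - a) 0 - σ)]
  · have hsqrt : √b ^ 2 = b := Real.sq_sqrt hb
    rw [max_eq_left hσb, add_eq (Real.sqrt_nonneg b) hsqrt.ge]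
    rcases le_total s (a + √b) with hs | hs
    · nlinarith [le_linear a b σ s]
    · have ht : max (s - a) 0 = s - a := max_eq_left (by linarith [Real.sqrt_nonneg b])
      have hquad := le_quadratic a b σ s
      rw [ht] at hquad
      nlinarith [mul_nonneg (sub_nonneg.2 hs) (by linarith : 0 ≤ s - a + √b - 2 * σ)]

end maximizerObjective

theorem stmt5_general (a b σ : ℝ) (hb : 0 ≤ b) (hσ : 0 ≤ σ)
    (f : ℝ → ℝ)
    (hf : ∀ s, f s = min b ((max (s - a) 0) ^ 2) - (s - σ) ^ 2 + s ^ 2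
        - (max (s - a) 0) ^ 2) :
    ∀ s, 0 ≤ s → f s ≤ f (a + max (Real.sqrt b) σ) := by
  intro s _
  rw [show f = maximizerObjective a b σ from funext hf]
  exact maximizerObjective.le_add_max_sqrt hb hσ s

/-- The unconstrained maximizer over `s ≥ 0` of
`f(s) = min(b, [s-a]₊²) - (s-σ)² + s² - [s-a]₊²` is `s* = a + max(√b, σ)`. -/
theorem stmt5 (a b σ : ℝ) (ha : 0 ≤ a) (hb : 0 ≤ b) (hσ : 0 ≤ σ)
    (f : ℝ → ℝ)
    (hf : ∀ s, f s = min b ((max (s - a) 0) ^ 2) - (s - σ) ^ 2 + s ^ 2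
        - (max (s - a) 0) ^ 2) :
    ∀ s, 0 ≤ s → f s ≤ f (a + max (Real.sqrt b) σ) :=
  stmt5_general a b σ hb hσ f hf
end

section
/- Fix ρ > 0, a, b ≥ 0, σ ≥ 0. The maximizer over s ≥ 0 of g(s) = min(b, [s-a]₊²) - ((ρ+1)/ρ)(s-σ)² + s² - [s-a]₊² is: s* = aρ/(ρ+1) + σ if a/(ρ+1) + √b < σ; s* = a + √b if (a+√b)/(1+ρ) ≤ σ ≤ a/(ρ+1) + √b; and s* = (1+ρ)σ if σ < (a+√b)/(1+ρ). -/
/-!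
Write `p = (1 + ρ) σ`. Completing the square, `g s = (1 + ρ) σ² - (s - p)² / ρ - [[s - a]₊² - b]₊`,
so `g` is maximised where this cost is minimised. The penalty vanishes up to the kink `a + √b`
and equals `(s - a)² - b` beyond it. If `p` lies left of the kink it minimises the cost outright.
Otherwise the cost decreases up to the kink, and beyond it is a parabola with vertex
`(p + ρ a) / (1 + ρ)`: the minimiser is that vertex if it lies right of the kink, and the kink if not.
-/

namespace RelaxedProx

noncomputable def cappedExcess (a b s : ℝ) : ℝ := max (max (s - a) 0 ^ 2 - b) 0

noncomputable def proxCost (ρ p a b s : ℝ) : ℝ := (s - p) ^ 2 / ρ + cappedExcess a b s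

lemma cappedExcess_nonneg (a b s : ℝ) : 0 ≤ cappedExcess a b s := le_max_right _ _

lemma cappedExcess_eq_zero {a b s : ℝ} (hb : 0 ≤ b) (hs : s ≤ a + √b) :
    cappedExcess a b s = 0 := by
  have hm : max (s - a) 0 ≤ √b := max_le (by linarith) (Real.sqrt_nonneg b)
  have : max (s - a) 0 ^ 2 ≤ b := by
    calc max (s - a) 0 ^ 2 ≤ √b ^ 2 := pow_le_pow_left₀ (le_max_right _ _) hm 2
      _ = b := Real.sq_sqrt hb
  exact max_eq_right (by linarith)

lemma cappedExcess_eq {a b s : ℝ} (hs : a + √b ≤ s) :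
    cappedExcess a b s = (s - a) ^ 2 - b := by
  have hsa : √b ≤ s - a := by linarith
  have : b ≤ (s - a) ^ 2 := calc
    b ≤ max b 0 := le_max_left b 0
    _ = √b ^ 2 := Real.sq_sqrt'.symm
    _ ≤ (s - a) ^ 2 := pow_le_pow_left₀ (Real.sqrt_nonneg b) hsa 2
  rw [cappedExcess, max_eq_left ((Real.sqrt_nonneg b).trans hsa)]
  exact max_eq_left (by linarith)

lemma objective_eq_sub_proxCost {ρ : ℝ} (hρ : ρ ≠ 0) (a b σ s : ℝ) :
    min b (max (s - a) 0 ^ 2) - ((ρ + 1) / ρ) * (s - σ) ^ 2 + s ^ 2 - max (s - a) 0 ^ 2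
      = (1 + ρ) * σ ^ 2 - proxCost ρ ((1 + ρ) * σ) a b s := by
  have hmin : min b (max (s - a) 0 ^ 2) - max (s - a) 0 ^ 2 = -cappedExcess a b s := by
    rw [cappedExcess]
    rcases le_total b (max (s - a) 0 ^ 2) with h | h <;> simp [h]
  rw [proxCost]
  field_simp
  linear_combination ρ * hmin

variable {ρ p a b : ℝ}

lemma proxCost_sub_proxCost {s t : ℝ} (hρ : 0 < ρ) (hs : a + √b ≤ s) (ht : a + √b ≤ t) :
    proxCost ρ p a b s - proxCost ρ p a b t
      = (1 + ρ) / ρ * ((s - (p + ρ * a) / (1 + ρ)) ^ 2 - (t - (p + ρ * a) / (1 + ρ)) ^ 2) := by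
  have h1ρ : 1 + ρ ≠ 0 := by positivity
  rw [proxCost, proxCost, cappedExcess_eq hs, cappedExcess_eq ht]
  field_simp
  ring

lemma proxCost_center_le (s : ℝ) (hρ : 0 < ρ) (hb : 0 ≤ b) (hp : p ≤ a + √b) :
    proxCost ρ p a b p ≤ proxCost ρ p a b s := by
  rw [proxCost, proxCost, sub_self, cappedExcess_eq_zero hb hp]
  simpa using add_nonneg (div_nonneg (sq_nonneg (s - p)) hρ.le) (cappedExcess_nonneg a b s)

lemma proxCost_le_of_le {s u : ℝ} (hρ : 0 < ρ) (hb : 0 ≤ b) (hsu : s ≤ u) (hu : u ≤ a + √b)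
    (hup : u ≤ p) : proxCost ρ p a b u ≤ proxCost ρ p a b s := by
  rw [proxCost, proxCost, cappedExcess_eq_zero hb hu, cappedExcess_eq_zero hb (hsu.trans hu)]
  have : (u - p) ^ 2 ≤ (s - p) ^ 2 := by nlinarith
  gcongr

lemma proxCost_kink_le (s : ℝ) (hρ : 0 < ρ) (hb : 0 ≤ b) (hp : a + √b ≤ p)
    (hv : (p + ρ * a) / (1 + ρ) ≤ a + √b) :
    proxCost ρ p a b (a + √b) ≤ proxCost ρ p a b s := by
  rcases le_total s (a + √b) with hs | hs
  · exact proxCost_le_of_le hρ hb hs le_rfl hp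
  · rw [← sub_nonneg, proxCost_sub_proxCost hρ hs le_rfl]
    have hsq : (a + √b - (p + ρ * a) / (1 + ρ)) ^ 2 ≤ (s - (p + ρ * a) / (1 + ρ)) ^ 2 :=
      pow_le_pow_left₀ (by linarith) (by linarith) 2
    have : 0 < 1 + ρ := by linarith
    exact mul_nonneg (by positivity) (sub_nonneg.2 hsq)

lemma proxCost_vertex_le (s : ℝ) (hρ : 0 < ρ) (hb : 0 ≤ b)
    (hv : a + √b ≤ (p + ρ * a) / (1 + ρ)) :
    proxCost ρ p a b ((p + ρ * a) / (1 + ρ)) ≤ proxCost ρ p a b s := by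
  have h1ρ : 0 < 1 + ρ := by linarith
  have hvertex_le : ∀ {t}, a + √b ≤ t →
      proxCost ρ p a b ((p + ρ * a) / (1 + ρ)) ≤ proxCost ρ p a b t := by
    intro t ht
    rw [← sub_nonneg, proxCost_sub_proxCost hρ ht hv, sub_self, zero_pow two_ne_zero, sub_zero]
    positivity
  rcases le_total (a + √b) s with hs | hs
  · exact hvertex_le hs
  · have hp : a + √b ≤ p := by
      rw [le_div_iff₀ h1ρ] at hv
      nlinarith [Real.sqrt_nonneg b]
    exact (hvertex_le le_rfl).trans (proxCost_le_of_le hρ hb hs le_rfl hp)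

end RelaxedProx

open RelaxedProx in
theorem stmt13_general (ρ a b σ : ℝ) (hρ : 0 < ρ) (hb : 0 ≤ b)
    (g : ℝ → ℝ)
    (hg : ∀ s, g s = min b ((max (s - a) 0) ^ 2) - ((ρ + 1) / ρ) * (s - σ) ^ 2
        + s ^ 2 - (max (s - a) 0) ^ 2) :
    ∀ s, 0 ≤ s →
      g s ≤ g (if a / (ρ + 1) + Real.sqrt b < σ then a * ρ / (ρ + 1) + σ
        else if σ < (a + Real.sqrt b) / (1 + ρ) then (1 + ρ) * σ
        else a + Real.sqrt b) := by
  intro s _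
  have h1ρ : 0 < 1 + ρ := by linarith
  have hvertex : a * ρ / (ρ + 1) + σ = ((1 + ρ) * σ + ρ * a) / (1 + ρ) := by
    field_simp
    ring
  have hvertex_gt : a / (ρ + 1) + √b < σ ↔ a + √b < ((1 + ρ) * σ + ρ * a) / (1 + ρ) := by
    have ha : a * ρ / (ρ + 1) + a / (ρ + 1) = a := by
      field_simp
    rw [← hvertex]
    constructor <;> intro <;> linarith
  simp only [hg, objective_eq_sub_proxCost hρ.ne', sub_le_sub_iff_left]
  split_ifs with h1 h2
  · rw [hvertex]
    exact proxCost_vertex_le s hρ hb (hvertex_gt.1 h1).le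
  · rw [lt_div_iff₀' h1ρ] at h2
    exact proxCost_center_le s hρ hb h2.le
  · rw [hvertex_gt, not_lt] at h1
    rw [not_lt, div_le_iff₀' h1ρ] at h2
    exact proxCost_kink_le s hρ hb h2 h1

/-- The maximizer over `s ≥ 0` of `g(s) = min(b,[s-a]₊²) - ((ρ+1)/ρ)(s-σ)² + s² - [s-a]₊²`
is `aρ/(ρ+1) + σ` if `a/(ρ+1) + √b < σ`; `a + √b` if
`(a+√b)/(1+ρ) ≤ σ ≤ a/(ρ+1) + √b`; and `(1+ρ)σ` if `σ < (a+√b)/(1+ρ)`. -/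
theorem stmt13 (ρ a b σ : ℝ) (hρ : 0 < ρ) (ha : 0 ≤ a) (hb : 0 ≤ b) (hσ : 0 ≤ σ)
    (g : ℝ → ℝ)
    (hg : ∀ s, g s = min b ((max (s - a) 0) ^ 2) - ((ρ + 1) / ρ) * (s - σ) ^ 2
        + s ^ 2 - (max (s - a) 0) ^ 2) :
    ∀ s, 0 ≤ s →
      g s ≤ g (if a / (ρ + 1) + Real.sqrt b < σ then a * ρ / (ρ + 1) + σ
        else if σ < (a + Real.sqrt b) / (1 + ρ) then (1 + ρ) * σ
        else a + Real.sqrt b) :=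
  stmt13_general ρ a b σ hρ hb g hg
end

section
/- Let h be defined on nonincreasing nonnegative vectors by h(σ) = Σᵢ hᵢ(σᵢ) where hᵢ(t) = 2aᵢt + bᵢ for t ≠ 0 and hᵢ(0) = 0, with (aᵢ), (bᵢ) nonnegative nondecreasing. Then the global minimum over nonincreasing nonnegative sequences σ of h(σ) + Σᵢ (σᵢ - σᵢ(X₀))² equals Σᵢ Fᵢ where Fᵢ = 2aᵢσᵢ(X₀) - aᵢ² + bᵢ if σᵢ(X₀) - aᵢ ≥ √bᵢ and Fᵢ = σᵢ(X₀)² otherwise. -/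
/-!
The objective is separable: coordinate `i` contributes `penalizedCost (a i) (b i) (σX₀ i) (σ i)`,
a function of `t = σ i ≥ 0` that equals `σX₀ i ^ 2` at `t = 0` and is a shifted parabola with
vertex `σX₀ i - a i` for `t > 0`; its minimum is `thresholdMin`, attained at the hard-thresholded
value `thresholdArgmin`. Since `σX₀ - a` is nonincreasing and `√b` nondecreasing, the coordinatewise
minimizers form a nonincreasing sequence, so the sum of the coordinatewise minima is attained
within the constraint set.
-/

open Real

noncomputable section

def penalizedCost (a b s t : ℝ) : ℝ :=
  (if t = 0 then 0 else 2 * a * t + b) + (t - s) ^ 2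

def thresholdArgmin (a b s : ℝ) : ℝ :=
  if √b ≤ s - a then s - a else 0

def thresholdMin (a b s : ℝ) : ℝ :=
  if √b ≤ s - a then 2 * a * s - a ^ 2 + b else s ^ 2

end

variable {a b s t : ℝ}

lemma thresholdMin_le_penalizedCost (hb : 0 ≤ b) (ht : 0 ≤ t) :
    thresholdMin a b s ≤ penalizedCost a b s t := by
  have hsq : √b ^ 2 = b := sq_sqrt hb
  unfold thresholdMin penalizedCost
  rcases ht.eq_or_lt with rfl | ht
  · rw [if_pos rfl]
    split_ifs with hc
    · nlinarith [sqrt_nonneg b]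
    · simp
  · rw [if_neg ht.ne']
    split_ifs with hc
    · nlinarith [sq_nonneg (t - (s - a))]
    · -- for `s - a < √b`: `t² - 2t(s - a) + b ≥ t² - 2t√b + b = (t - √b)²`
      nlinarith [sq_nonneg (t - √b), mul_lt_mul_of_pos_left (not_le.mp hc) ht]

lemma penalizedCost_thresholdArgmin (hb : 0 ≤ b) :
    penalizedCost a b s (thresholdArgmin a b s) = thresholdMin a b s := by
  unfold penalizedCost thresholdArgmin thresholdMin
  by_cases hc : √b ≤ s - a
  · rw [if_pos hc, if_pos hc]
    by_cases hz : s - a = 0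
    · have hb0 : b = 0 := sqrt_eq_zero hb |>.mp (le_antisymm (hz ▸ hc) (sqrt_nonneg b))
      have hs : s = a := sub_eq_zero.mp hz
      rw [if_pos hz, hb0, hs]
      ring
    · rw [if_neg hz]
      ring
  · simp [hc]

lemma thresholdArgmin_nonneg : 0 ≤ thresholdArgmin a b s := by
  unfold thresholdArgmin
  split_ifs with hc
  · exact (sqrt_nonneg b).trans hc
  · exact le_rfl

lemma antitone_thresholdArgmin {ι : Type*} [Preorder ι] {a b s : ι → ℝ}
    (ha : Monotone a) (hb : Monotone b) (hs : Antitone s) :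
    Antitone fun i => thresholdArgmin (a i) (b i) (s i) := by
  intro i j hij
  have hgap : s j - a j ≤ s i - a i := by linarith [hs hij, ha hij]
  by_cases hj : √(b j) ≤ s j - a j
  · have hi : √(b i) ≤ s i - a i :=
      (sqrt_le_sqrt (hb hij)).trans (hj.trans hgap)
    simp only [thresholdArgmin, if_pos hi, if_pos hj]
    exact hgap
  · simp only [thresholdArgmin, if_neg hj]
    exact thresholdArgmin_nonneg

theorem stmt15_general (k : ℕ) (a b σX₀ : Fin k → ℝ)
    (hb0 : ∀ i, 0 ≤ b i)
    (ham : Monotone a) (hbm : Monotone b)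
    (hσm : Antitone σX₀) :
    IsLeast
      {v : ℝ | ∃ σ : Fin k → ℝ, Antitone σ ∧ (∀ i, 0 ≤ σ i) ∧
        v = ∑ i, ((if σ i = 0 then 0 else 2 * a i * σ i + b i)
              + (σ i - σX₀ i) ^ 2)}
      (∑ i, if Real.sqrt (b i) ≤ σX₀ i - a i
        then 2 * a i * σX₀ i - (a i) ^ 2 + b i
        else (σX₀ i) ^ 2) := by
  refine ⟨⟨fun i => thresholdArgmin (a i) (b i) (σX₀ i), antitone_thresholdArgmin ham hbm hσm,
    fun _ => thresholdArgmin_nonneg, ?_⟩, ?_⟩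
  · exact (Finset.sum_congr rfl fun i _ => penalizedCost_thresholdArgmin (hb0 i)).symm
  · rintro v ⟨σ, -, hσ, rfl⟩
    exact Finset.sum_le_sum fun i _ => thresholdMin_le_penalizedCost (hb0 i) (hσ i)

/-- The global minimum of `h(σ) + ∑ (σᵢ - σᵢ(X₀))²` over nonincreasing nonnegative
sequences, where `hᵢ(t) = 2aᵢt + bᵢ` for `t ≠ 0` and `hᵢ(0) = 0`, equals `∑ Fᵢ` with
`Fᵢ = 2aᵢσᵢ(X₀) - aᵢ² + bᵢ` if `σᵢ(X₀) - aᵢ ≥ √bᵢ` and `Fᵢ = σᵢ(X₀)²` otherwise. -/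
theorem stmt15 (k : ℕ) (a b σX₀ : Fin k → ℝ)
    (ha0 : ∀ i, 0 ≤ a i) (hb0 : ∀ i, 0 ≤ b i)
    (ham : Monotone a) (hbm : Monotone b)
    (hσ0 : ∀ i, 0 ≤ σX₀ i) (hσm : Antitone σX₀) :
    IsLeast
      {v : ℝ | ∃ σ : Fin k → ℝ, Antitone σ ∧ (∀ i, 0 ≤ σ i) ∧
        v = ∑ i, ((if σ i = 0 then 0 else 2 * a i * σ i + b i)
              + (σ i - σX₀ i) ^ 2)}
      (∑ i, if Real.sqrt (b i) ≤ σX₀ i - a i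
        then 2 * a i * σX₀ i - (a i) ^ 2 + b i
        else (σX₀ i) ^ 2) :=
  stmt15_general k a b σX₀ hb0 ham hbm hσm
end
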